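/- arXiv:2404.18755 — 2 statements merged into one kernel-verified Lean document; each statement's English description precedes it below -/
import Mathlib

section
/- Let R be a social ranking solution satisfying Symmetry (Sym) and Per-size Coalitional Anonymity (PCA). Then for all i, j ∈ N and every coalitional ranking ≿ such that M^{≿,i}_{sk} = M^{≿,j}_{sk} for all s ∈ {1,…,n} and all k ∈ {1,…,l}, it holds that i I^≿ j. -/
open scoped Classical

noncomputable section

namespace SocialRanking

/-- A coalition: a non-empty subset of the player set `N`. -/
abbrev Coal (N : Type*) : Type _ := {S : Finset N // S.Nonempty}

/-- A coalitional ranking: a total preorder on the non-empty coalitions of `N`. -/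
structure CoalRanking (N : Type*) where
  rel : Coal N → Coal N → Prop
  total : ∀ S T, rel S T ∨ rel T S
  trans : ∀ S T U, rel S T → rel T U → rel S U

variable {N : Type*}

/-- The asymmetric part `≻` of a coalitional ranking. -/
def CoalRanking.strictRel (r : CoalRanking N) (S T : Coal N) : Prop :=
  r.rel S T ∧ ¬ r.rel T S

/-- The symmetric part `∼` of a coalitional ranking. -/
def CoalRanking.simRel (r : CoalRanking N) (S T : Coal N) : Prop :=
  r.rel S T ∧ r.rel T S

/-- A (candidate) social ranking solution: it assigns to every coalitional ranking a
binary relation on the players. -/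
abbrev Sol (N : Type*) : Type _ := CoalRanking N → N → N → Prop

/-- A social ranking solution yields a *total* relation on every coalitional ranking. -/
def IsTotalSol (R : Sol N) : Prop := ∀ r i j, R r i j ∨ R r j i

/-- The asymmetric part `P^≿` of a social ranking. -/
def Psol (R : Sol N) (r : CoalRanking N) (i j : N) : Prop := R r i j ∧ ¬ R r j i

/-- The symmetric part `I^≿` of a social ranking. -/
def Isol (R : Sol N) (r : CoalRanking N) (i j : N) : Prop := R r i j ∧ R r j i

/-- `S` belongs to the worst equivalence class of `r`. -/
def worst (r : CoalRanking N) (S : Coal N) : Prop := ∀ T, r.rel T S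

/-- `S` belongs to the best equivalence class of `r`. -/
def best (r : CoalRanking N) (S : Coal N) : Prop := ∀ T, r.rel S T

/-- `S` belongs to the second-worst equivalence class of `r`. -/
def secondWorst (r : CoalRanking N) (S : Coal N) : Prop :=
  ¬ worst r S ∧ ∀ T, ¬ worst r T → r.rel T S

section Defs

variable [DecidableEq N] [Fintype N]

/-- The coalition `S ∪ {i}`. -/
def ins (i : N) (S : Finset N) : Coal N := ⟨insert i S, Finset.insert_nonempty i S⟩

/-- `D_{ij}(≿)`: the coalitions `S ⊆ N \ {i,j}` with `S ∪ {i} ≻ S ∪ {j}`. -/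
def Dset (r : CoalRanking N) (i j : N) : Finset (Finset N) :=
  Finset.univ.filter fun S => i ∉ S ∧ j ∉ S ∧ r.strictRel (ins i S) (ins j S)

/-- The equivalence class of `S` in `r`. -/
def classOf (r : CoalRanking N) (S : Coal N) : Finset (Coal N) :=
  Finset.univ.filter fun T => r.simRel T S

/-- The (0-indexed) level of `S`: the number of equivalence classes strictly above `S`.
Thus the `k`-th equivalence class `Σ_k` of the quotient order (1-indexed, from best to
worst) is `{S | level r S = k - 1}`. -/
def level (r : CoalRanking N) (S : Coal N) : ℕ :=
  ((Finset.univ.filter fun T => r.strictRel T S).image (classOf r)).card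

/-- The number `l` of equivalence classes of `r`. -/
def numClasses (r : CoalRanking N) : ℕ :=
  (Finset.univ.image (classOf r)).card

/-- `theta r i k` is the number of coalitions containing `i` in the `(k+1)`-st
equivalence class of `r`, i.e. the `(k+1)`-st entry of the vector `θ^≿(i)`. -/
def theta (r : CoalRanking N) (i : N) (k : ℕ) : ℕ :=
  (Finset.univ.filter fun S : Coal N => level r S = k ∧ i ∈ S.1).card

/-- `Mmat r i s k` is the number of coalitions of size `s` containing `i` in the
`(k+1)`-st equivalence class of `r` (the entry `M^{≿,i}_{s,k+1}`). -/
def Mmat (r : CoalRanking N) (i : N) (s k : ℕ) : ℕ :=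
  (Finset.univ.filter fun S : Coal N => S.1.card = s ∧ level r S = k ∧ i ∈ S.1).card

/-- The CP-majority solution: `i R_CP^≿ j ⇔ |D_{ij}(≿)| ≥ |D_{ji}(≿)|`. -/
def cpSol : Sol N := fun r i j => (Dset r j i).card ≤ (Dset r i j).card

/-- The lexicographic excellence (lex-cel) solution: `i R_le^≿ j ⇔ θ^≿(i) ≥_L θ^≿(j)`. -/
def lexcelSol : Sol N := fun r i j =>
  (∀ k, theta r i k = theta r j k) ∨
    ∃ s, (∀ k, k < s → theta r i k = theta r j k) ∧ theta r j s < theta r i s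

/-- The dual-lex solution: `i R_d^≿ j ⇔ θ^≿(i) ≥_{L*} θ^≿(j)`. -/
def duallexSol : Sol N := fun r i j =>
  (∀ k, theta r i k = theta r j k) ∨
    ∃ s, (∀ k, s < k → theta r i k = theta r j k) ∧ theta r i s < theta r j s

/-- The `L⁽¹⁾` solution. -/
def L1Sol : Sol N := fun r i j =>
  (∀ s k, Mmat r i s k = Mmat r j s k) ∨
    ∃ shat khat : ℕ, 1 ≤ shat ∧ shat ≤ Fintype.card N ∧ khat + 1 < numClasses r ∧
      (∀ s k, k < khat → Mmat r i s k = Mmat r j s k) ∧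
      (∀ s, s < shat → Mmat r i s khat = Mmat r j s khat) ∧
      Mmat r j shat khat < Mmat r i shat khat

/-- The `L⁽¹⁾_*` solution. -/
def L1starSol : Sol N := fun r i j =>
  (∀ s k, Mmat r i s k = Mmat r j s k) ∨
    ∃ shat khat : ℕ, 1 ≤ shat ∧ shat ≤ Fintype.card N ∧ 1 ≤ khat ∧ khat < numClasses r ∧
      (∀ s k, khat < k → Mmat r i s k = Mmat r j s k) ∧
      (∀ s, s < shat → Mmat r i s khat = Mmat r j s khat) ∧
      Mmat r i shat khat < Mmat r j shat khat

/-- Strict Desirability (SDes). -/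
def SDes (R : Sol N) : Prop :=
  ∀ (r : CoalRanking N) (i j : N),
    (∀ S : Finset N, i ∉ S → j ∉ S → r.rel (ins i S) (ins j S)) →
    (∃ T : Finset N, i ∉ T ∧ j ∉ T ∧ r.strictRel (ins i T) (ins j T)) →
    Psol R r i j

/-- Symmetry (Sym). -/
def SymAx (R : Sol N) : Prop :=
  ∀ (r : CoalRanking N) (i j : N),
    (∀ S : Finset N, i ∉ S → j ∉ S → r.simRel (ins i S) (ins j S)) →
    Isol R r i j

/-- Neutrality (Neu). -/
def Neu (R : Sol N) : Prop :=
  ∀ (r r' : CoalRanking N) (i j : N),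
    (∀ S : Finset N, i ∉ S → j ∉ S →
      (r.rel (ins i S) (ins j S) ↔ r'.rel (ins j S) (ins i S))) →
    (R r i j ↔ R r' j i)

/-- Equality of Coalitions (EC). -/
def EC (R : Sol N) : Prop :=
  ∀ (r r' : CoalRanking N) (i j : N)
    (π : {S : Finset N // i ∉ S ∧ j ∉ S} ≃ {S : Finset N // i ∉ S ∧ j ∉ S}),
    (∀ S : {S : Finset N // i ∉ S ∧ j ∉ S},
      (r.rel (ins i S.1) (ins j S.1) ↔ r'.rel (ins i (π S).1) (ins j (π S).1))) →
    (R r i j ↔ R r' i j)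

/-- Coalitional Anonymity (CA). -/
def CA (R : Sol N) : Prop :=
  ∀ (r r' : CoalRanking N) (i j : N)
    (π : {S : Finset N // i ∉ S ∧ j ∉ S} ≃ {S : Finset N // i ∉ S ∧ j ∉ S}),
    (∀ S T : {S : Finset N // i ∉ S ∧ j ∉ S},
      (r.rel (ins i S.1) (ins j T.1) ↔ r'.rel (ins i (π S).1) (ins j T.1))) →
    (R r i j ↔ R r' i j)

/-- Per-size Coalitional Anonymity (PCA). -/
def PCA (R : Sol N) : Prop :=
  ∀ (r r' : CoalRanking N) (i j : N)
    (π : {S : Finset N // i ∉ S ∧ j ∉ S} ≃ {S : Finset N // i ∉ S ∧ j ∉ S}),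
    (∀ S : {S : Finset N // i ∉ S ∧ j ∉ S}, (π S).1.card = S.1.card) →
    (∀ S T : {S : Finset N // i ∉ S ∧ j ∉ S}, S.1.card = T.1.card →
      (r.rel (ins i S.1) (ins j T.1) ↔ r'.rel (ins i (π S).1) (ins j T.1))) →
    (R r i j ↔ R r' i j)

/-- Consistency After Tiebreaks (CAT): viewing coalitional rankings as sets of ordered
pairs, `B ⊆ ≿ ∩ ≿'` is removed from both `≿` and `≿'`, the results `rB = ≿ \ B` and
`r'B = ≿' \ B` being again total preorders. -/
def CAT (R : Sol N) : Prop :=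
  ∀ (r r' rB r'B : CoalRanking N) (i j : N) (B : Coal N → Coal N → Prop),
    Isol R r i j → Isol R r' i j →
    (∀ S T, B S T → r.rel S T ∧ r'.rel S T) →
    (∀ S T, rB.rel S T ↔ (r.rel S T ∧ ¬ B S T)) →
    (∀ S T, r'B.rel S T ↔ (r'.rel S T ∧ ¬ B S T)) →
    (R rB i j ↔ R r'B i j)

/-- Independence from the Worst Set (IWS): if `r` has at least two equivalence classes
and `i P^r j`, then `i P^{r'} j` for every coalitional ranking `r'` obtained from `r` by
replacing the worst equivalence class by an ordered partition of it (equivalently, `r'`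
agrees with `r` on every pair of coalitions not both in the worst class of `r`). -/
def IWS (R : Sol N) : Prop :=
  ∀ (r r' : CoalRanking N) (i j : N),
    (∃ S T, r.strictRel S T) →
    Psol R r i j →
    (∀ S T : Coal N, ¬(worst r S ∧ worst r T) → (r.rel S T ↔ r'.rel S T)) →
    Psol R r' i j

/-- Independence from the Best Set (IBS). -/
def IBS (R : Sol N) : Prop :=
  ∀ (r r' : CoalRanking N) (i j : N),
    (∃ S T, r.strictRel S T) →
    Psol R r i j →
    (∀ S T : Coal N, ¬(best r S ∧ best r T) → (r.rel S T ↔ r'.rel S T)) →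
    Psol R r' i j

/-- A dichotomous coalitional ranking: exactly two equivalence classes. -/
def dichotomous (r : CoalRanking N) : Prop :=
  (∃ S T, r.strictRel S T) ∧ ∀ S, best r S ∨ worst r S

/-- `i` `k`-dominates `j` strictly: `i P_k^≿ j`. -/
def kDomS (r : CoalRanking N) (i j : N) (k : ℕ) : Prop :=
  (∀ S : Finset N, i ∉ S → j ∉ S → S.card = k → r.rel (ins i S) (ins j S)) ∧
  ∃ S : Finset N, i ∉ S ∧ j ∉ S ∧ S.card = k ∧ r.strictRel (ins i S) (ins j S)

/-- `i` and `j` are `k`-indifferent: `i I_k^≿ j`. -/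
def kIndiff (r : CoalRanking N) (i j : N) (k : ℕ) : Prop :=
  ∀ S : Finset N, i ∉ S → j ∉ S → S.card = k → r.simRel (ins i S) (ins j S)

/-- `KP_{ij}^≿ = {k ∈ {0,…,n-2} : i P_k^≿ j}`. -/
def KP (r : CoalRanking N) (i j : N) : Finset ℕ :=
  (Finset.range (Fintype.card N - 1)).filter fun k => kDomS r i j k

/-- `k`-Desirability on Dichotomous rankings (k-DD). -/
def kDD (R : Sol N) : Prop :=
  ∀ (r : CoalRanking N) (i j : N),
    dichotomous r →
    (∀ k, k < Fintype.card N - 1 → kDomS r i j k ∨ kDomS r j i k ∨ kIndiff r i j k) →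
    ∀ (h1 : (KP r i j).Nonempty) (h2 : (KP r j i).Nonempty),
      (KP r i j).min' h1 < (KP r j i).min' h2 → Psol R r i j

/-- Consistency after Indifference (CI): `Sig` is a proper subset of the worst class
`Σ_l` of `r` (which has `l ≥ 2` classes) and `i I^r j`; `r'` is the ranking with
quotient order `Σ_1 ≻' … ≻' Σ_{l-1} ∪ Sig ≻' Σ_l \ Sig`, and `r''` the dichotomous
ranking with quotient order `Σ_1 ∪ … ∪ Σ_{l-1} ∪ Sig ≻'' Σ_l \ Sig`. -/
def CI (R : Sol N) : Prop :=
  ∀ (r r' r'' : CoalRanking N) (i j : N) (Sig : Set (Coal N)),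
    (∃ S T, r.strictRel S T) →
    Isol R r i j →
    (∀ S ∈ Sig, worst r S) →
    (∃ S, worst r S ∧ S ∉ Sig) →
    (∀ S T, r'.rel S T ↔
      ((worst r T ∧ T ∉ Sig) ∨
        (¬(worst r S ∧ S ∉ Sig) ∧ (r.rel S T ∨ secondWorst r T ∨ T ∈ Sig)))) →
    (∀ S T, r''.rel S T ↔ ((worst r T ∧ T ∉ Sig) ∨ ¬(worst r S ∧ S ∉ Sig))) →
    (R r' i j ↔ R r'' i j)

/-- `r'` is `i`-improving and `j`-invariant with respect to `r`: the only difference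
between the two rankings is that the coalitions in some non-empty family `E` (all
containing `i` but not `j`) are strictly better ranked in `r'` than in `r`, while all
other coalitions keep their ranking positions. -/
def Improving (r r' : CoalRanking N) (i j : N) : Prop :=
  ∃ E : Set (Coal N), E.Nonempty ∧
    (∀ S ∈ E, i ∈ S.1 ∧ j ∉ S.1) ∧
    (∀ S T : Coal N, S ∉ E → T ∉ E → (r.rel S T ↔ r'.rel S T)) ∧
    (∀ S ∈ E, ∀ T : Coal N, (r.rel S T → r'.rel S T) ∧ (r'.rel T S → r.rel T S)) ∧
    (∀ S ∈ E, ∃ T : Coal N, r.rel T S ∧ ¬ r'.rel T S)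

/-- Monotonicity (M). -/
def MonoAx (R : Sol N) : Prop :=
  ∀ (r r' : CoalRanking N) (i j : N),
    Isol R r i j → Improving r r' i j → Psol R r' i j

end Defs

/-! Let `A` be the family of subsets of `N \ {i, j}`. A coalition of size `s + 1` containing `i`
either contains `j` too, and is then counted in `M^{≿,j}` as well, or is `S ∪ {i}` for a unique
`S ∈ A`. Hence `M^{≿,i} = M^{≿,j}` says that, for every size and every class `Σ_k`, as many
`S ∈ A` have `S ∪ {i} ∈ Σ_k` as have `S ∪ {j} ∈ Σ_k`, so a size-preserving bijection `π` of `A`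
puts `π(S) ∪ {j}` in the class of `S ∪ {i}`.

Let `≿'` rank every coalition `T` as `≿` ranks `(T \ {i}) ∪ {j}`. Then `S ∪ {i} ∼' S ∪ {j}`, so
`i I^{≿'} j` by Sym, and by the choice of `π` the rankings `≿` and `≿'` are related as in PCA,
which transfers `i R j` back to `≿`. Exchanging the players gives `j R i`. -/

namespace CoalRanking

variable (r : CoalRanking N)

theorem rel_refl (S : Coal N) : r.rel S S := (r.total S S).elim id id

theorem rel_congr_left {S S' T : Coal N} (h : r.simRel S S') : r.rel S T ↔ r.rel S' T :=
  ⟨r.trans _ _ _ h.2, r.trans _ _ _ h.1⟩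

def comap (g : Coal N → Coal N) : CoalRanking N where
  rel S T := r.rel (g S) (g T)
  total S T := r.total (g S) (g T)
  trans S T U := r.trans (g S) (g T) (g U)

end CoalRanking

section Level

variable [DecidableEq N] [Fintype N] (r : CoalRanking N)

theorem level_lt_level_of_not_rel {S T : Coal N} (h : ¬ r.rel S T) : level r T < level r S := by
  have hTS : r.rel T S := (r.total S T).resolve_left h
  have above_subset : (Finset.univ.filter fun U => r.strictRel U T) ⊆
      (Finset.univ.filter fun U => r.strictRel U S) := by
    intro U hU
    simp only [Finset.mem_filter, Finset.mem_univ, true_and] at hU ⊢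
    exact ⟨r.trans _ _ _ hU.1 hTS, fun hSU => hU.2 (r.trans _ _ _ hTS hSU)⟩
  refine Finset.card_lt_card <| (Finset.ssubset_iff_of_subset
    (Finset.image_subset_image above_subset)).2 ⟨classOf r T, ?_, ?_⟩
  · exact Finset.mem_image_of_mem _ (Finset.mem_filter.2 ⟨Finset.mem_univ _, hTS, h⟩)
  · simp only [Finset.mem_image, Finset.mem_filter, Finset.mem_univ, true_and, not_exists,
      not_and]
    intro U hUT hclass
    have hT : T ∈ classOf r U :=
      hclass ▸ Finset.mem_filter.2 ⟨Finset.mem_univ _, r.rel_refl T, r.rel_refl T⟩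
    simp only [classOf, Finset.mem_filter, Finset.mem_univ, true_and] at hT
    exact hUT.2 hT.1

theorem simRel_of_level_eq {S T : Coal N} (h : level r S = level r T) : r.simRel S T := by
  by_contra hST
  rcases not_and_or.1 hST with hST | hTS
  · exact (level_lt_level_of_not_rel r hST).ne h.symm
  · exact (level_lt_level_of_not_rel r hTS).ne h

end Level

section Counting

variable [DecidableEq N] {i j : N}

def insEquiv (hij : i ≠ j) :
    {S : Finset N // i ∉ S ∧ j ∉ S} ≃ {T : Coal N // i ∈ T.1 ∧ j ∉ T.1} where
  toFun S := ⟨ins i S.1, Finset.mem_insert_self i S.1, by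
    simpa [ins, Ne.symm hij] using S.2.2⟩
  invFun T :=
    ⟨T.1.1.erase i, Finset.notMem_erase i _, fun h => T.2.2 (Finset.mem_of_mem_erase h)⟩
  left_inv S := Subtype.ext (Finset.erase_insert S.2.1)
  right_inv T := Subtype.ext (Subtype.ext (Finset.insert_erase T.2.1))

theorem card_ins_fiber [Fintype N] (hij : i ≠ j) (q : Coal N → Prop) [DecidablePred q] :
    Fintype.card {S : {S : Finset N // i ∉ S ∧ j ∉ S} // q (ins i S.1)} =
      (Finset.univ.filter fun T : Coal N => q T ∧ i ∈ T.1 ∧ j ∉ T.1).card := by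
  rw [← Fintype.card_subtype]
  exact Fintype.card_congr <| ((insEquiv hij).subtypeEquiv fun _ => Iff.rfl).trans <|
    (Equiv.subtypeSubtypeEquivSubtypeInter _ q).trans (Equiv.subtypeEquivRight fun _ => and_comm)

/-- The entry `(s, k)` of `M^{≿,i}` counts the coalitions `T ∋ i` with
`sizeLevel r T = (s, k - 1)`. -/
def sizeLevel [Fintype N] (r : CoalRanking N) (T : Coal N) : ℕ × ℕ := (T.1.card, level r T)

theorem card_sizeLevel_fiber_eq [Fintype N] {r : CoalRanking N} (hij : i ≠ j)
    (h : ∀ s k, Mmat r i s k = Mmat r j s k) (p : ℕ × ℕ) :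
    Fintype.card {S : {S : Finset N // i ∉ S ∧ j ∉ S} // sizeLevel r (ins i S.1) = p} =
      Fintype.card {S : {S : Finset N // i ∉ S ∧ j ∉ S} // sizeLevel r (ins j S.1) = p} := by
  have hM (a : N) : Mmat r a p.1 p.2 =
      (Finset.univ.filter fun T : Coal N => sizeLevel r T = p ∧ a ∈ T.1).card := by
    simp only [Mmat, sizeLevel, Prod.ext_iff, and_assoc]
  have hswap :
      Fintype.card {S : {S : Finset N // i ∉ S ∧ j ∉ S} // sizeLevel r (ins j S.1) = p} =
        Fintype.card {S : {S : Finset N // j ∉ S ∧ i ∉ S} // sizeLevel r (ins j S.1) = p} :=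
    Fintype.card_congr <|
      (Equiv.subtypeEquivRight fun _ => and_comm).subtypeEquiv fun _ => Iff.rfl
  rw [hswap, card_ins_fiber hij (sizeLevel r · = p), card_ins_fiber hij.symm (sizeLevel r · = p)]
  convert Finset.card_sdiff_comm ((hM i).symm.trans ((h _ _).trans (hM j))) using 2 <;>
    ext T <;> simp only [Finset.mem_filter, Finset.mem_sdiff, Finset.mem_univ, true_and] <;> tauto

end Counting

section Replace

variable [DecidableEq N] {i j : N} {S : Finset N}

def replace (i j : N) (T : Coal N) : Coal N := ins j (T.1.erase i)

theorem replace_ins_self (hi : i ∉ S) : replace i j (ins i S) = ins j S := by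
  simp only [replace, ins, Finset.erase_insert hi]

theorem replace_ins_of_ne (hij : i ≠ j) (hi : i ∉ S) : replace i j (ins j S) = ins j S := by
  have hi' : i ∉ insert j S := by simp [hij, hi]
  simp only [replace, ins, Finset.erase_eq_of_notMem hi', Finset.insert_idem]

end Replace

section

variable [DecidableEq N] [Fintype N]

theorem rel_of_Mmat_eq {R : Sol N} (hSym : SymAx R) (hPCA : PCA R) {r : CoalRanking N}
    {i j : N} (hij : i ≠ j) (h : ∀ s k, Mmat r i s k = Mmat r j s k) : R r i j := by
  obtain ⟨π, hπ⟩ : ∃ π : {S : Finset N // i ∉ S ∧ j ∉ S} ≃ {S : Finset N // i ∉ S ∧ j ∉ S},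
      ∀ S, sizeLevel r (ins j (π S).1) = sizeLevel r (ins i S.1) :=
    ⟨_, Equiv.ofFiberEquiv_map fun p =>
      (Fintype.card_eq.1 (card_sizeLevel_fiber_eq hij h p)).some⟩
  have hr' : Isol R (r.comap (replace i j)) i j := hSym _ i j fun S hi _ => by
    simp only [CoalRanking.simRel, CoalRanking.comap, replace_ins_self hi,
      replace_ins_of_ne hij hi, and_self, r.rel_refl]
  refine (hPCA r _ i j π (fun S => ?_) (fun S T _ => ?_)).2 hr'.1
  · have hcard := congrArg Prod.fst (hπ S)
    simp only [sizeLevel, ins, Finset.card_insert_of_notMem (π S).2.2,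
      Finset.card_insert_of_notMem S.2.1] at hcard
    omega
  · simp only [CoalRanking.comap, replace_ins_self (π S).2.1, replace_ins_of_ne hij T.2.1]
    exact r.rel_congr_left (simRel_of_level_eq r (congrArg Prod.snd (hπ S)).symm)

theorem stmt5_general (R : Sol N) (hSym : SymAx R) (hPCA : PCA R)
    (r : CoalRanking N) (i j : N) (h : ∀ s k, Mmat r i s k = Mmat r j s k) :
    Isol R r i j := by
  rcases eq_or_ne i j with rfl | hij
  · exact hSym r i i fun S _ _ => ⟨r.rel_refl _, r.rel_refl _⟩
  · exact ⟨rel_of_Mmat_eq hSym hPCA hij h,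
      rel_of_Mmat_eq hSym hPCA hij.symm fun s k => (h s k).symm⟩

/-- if a social ranking solution `R` satisfies Symmetry and Per-size
Coalitional Anonymity, then `M^{≿,i} = M^{≿,j}` implies `i I^≿ j`. -/
theorem stmt5 (R : Sol N) (hTot : IsTotalSol R) (hSym : SymAx R) (hPCA : PCA R)
    (r : CoalRanking N) (i j : N) (h : ∀ s k, Mmat r i s k = Mmat r j s k) :
    Isol R r i j :=
  stmt5_general R hSym hPCA r i j h

end

end SocialRanking
end
end

section
/- If |N| ≥ 3, none of the CP-majority R_CP, the lex-cel R_le and the L^{(1)} solution satisfies Independence from the Best Set (IBS). -/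
open scoped Classical

noncomputable section

namespace SocialRanking

variable {N : Type*}

/-!
Take three distinct players `i`, `j`, `c` and the dichotomous ranking whose best class is
`{{i}, {j}, {i, c}}`. There `i` beats `j` for all three solutions: `{c} ∈ D_ij` while
`D_ji = ∅`; `i` lies in two best coalitions and `j` in one; and the singletons tie while `i`
wins among pairs. Now split the best class into `{j} ≻ {{i}, {i, c}}`, which changes nothing
outside it. Then `∅ ∈ D_ji` restores a CP tie, and `j` alone fills the new best class, so
lex-cel and `L⁽¹⁾` rank `j` strictly above `i`.
-/

def rk (f : Finset N → ℕ) : CoalRanking N where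
  rel S T := f S.1 ≤ f T.1
  total _ _ := le_total _ _
  trans _ _ _ := le_trans

theorem rk_strictRel_iff {f : Finset N → ℕ} {S T : Coal N} :
    (rk f).strictRel S T ↔ f S.1 < f T.1 :=
  lt_iff_le_not_ge.symm

theorem best_rk_iff {f : Finset N → ℕ} (hmin : ∃ T : Coal N, f T.1 = 0) {S : Coal N} :
    best (rk f) S ↔ f S.1 = 0 := by
  obtain ⟨T, hT⟩ := hmin
  refine ⟨fun h => Nat.le_zero.mp (hT ▸ h T), fun h U => ?_⟩
  show f S.1 ≤ f U.1
  omega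

theorem not_IBS_of_psol_of_rel {R : Sol N} {r r' : CoalRanking N} {i j : N}
    (hstrict : ∃ S T, r.strictRel S T)
    (hagree : ∀ S T : Coal N, ¬(best r S ∧ best r T) → (r.rel S T ↔ r'.rel S T))
    (hP : Psol R r i j) (hR : R r' j i) : ¬ IBS R :=
  fun hIBS => (hIBS r r' i j hstrict hP hagree).2 hR

def topRank (A : Finset (Finset N)) (S : Finset N) : ℕ := if S ∈ A then 0 else 1

def promoteToTop (f : Finset N → ℕ) (T₀ S : Finset N) : ℕ := if S = T₀ then 0 else f S + 1

theorem topRank_eq_zero_iff {A : Finset (Finset N)} {S : Finset N} :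
    topRank A S = 0 ↔ S ∈ A := by
  unfold topRank; split_ifs <;> simp_all

theorem topRank_lt_iff {A : Finset (Finset N)} {S T : Finset N} :
    topRank A S < topRank A T ↔ S ∈ A ∧ T ∉ A := by
  unfold topRank; split_ifs <;> simp_all

theorem promoteToTop_eq_zero_iff {f : Finset N → ℕ} {T₀ S : Finset N} :
    promoteToTop f T₀ S = 0 ↔ S = T₀ := by
  unfold promoteToTop; split_ifs <;> simp_all

theorem promoteToTop_of_ne {f : Finset N → ℕ} {T₀ S : Finset N} (h : S ≠ T₀) :
    promoteToTop f T₀ S = f S + 1 :=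
  if_neg h

theorem rk_promoteToTop_rel_iff {f : Finset N → ℕ} {T₀ : Finset N} (hT₀ : f T₀ = 0)
    {S T : Coal N} (hST : ¬(f S.1 = 0 ∧ f T.1 = 0)) :
    (rk (promoteToTop f T₀)).rel S T ↔ (rk f).rel S T := by
  change promoteToTop f T₀ S.1 ≤ promoteToTop f T₀ T.1 ↔ f S.1 ≤ f T.1
  unfold promoteToTop
  split_ifs <;> simp_all

theorem card_filter_coal [Fintype N] (q : Finset N → Prop) [DecidablePred q] (hq : ¬ q ∅) :
    (Finset.univ.filter fun S : Coal N => q S.1).card = (Finset.univ.filter q).card := by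
  refine Finset.card_nbij Subtype.val (fun S hS => by simpa using hS)
    Subtype.val_injective.injOn fun S hS => ?_
  have hS : q S := by simpa using hS
  have hne : S.Nonempty := Finset.nonempty_iff_ne_empty.mpr fun h => hq (h ▸ hS)
  exact ⟨⟨S, hne⟩, by simpa using hS, rfl⟩

section Counting

variable [DecidableEq N] [Fintype N]

theorem level_eq_zero_iff_best {r : CoalRanking N} {S : Coal N} :
    level r S = 0 ↔ best r S := by
  rw [level, Finset.card_eq_zero, Finset.image_eq_empty, Finset.filter_eq_empty_iff]
  simp only [Finset.mem_univ, true_implies, CoalRanking.strictRel, not_and, not_not]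
  exact ⟨fun h T => (r.total S T).elim id fun hTS => h hTS, fun h T _ => h T⟩

theorem one_lt_numClasses_of_strictRel {r : CoalRanking N} {S T : Coal N}
    (h : r.strictRel S T) : 1 < numClasses r := by
  refine Finset.one_lt_card.mpr ⟨classOf r S, by simp, classOf r T, by simp, fun hST => ?_⟩
  have hS : S ∈ classOf r S := by
    rw [classOf, Finset.mem_filter]
    have hSS : r.rel S S := (r.total S S).elim id id
    exact ⟨Finset.mem_univ S, hSS, hSS⟩
  rw [hST, classOf, Finset.mem_filter] at hS
  exact h.2 hS.2.2

theorem Mmat_size_zero (r : CoalRanking N) (i : N) (k : ℕ) : Mmat r i 0 k = 0 := by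
  rw [Mmat, Finset.card_eq_zero, Finset.filter_eq_empty_iff]
  exact fun S _ hS => S.2.ne_empty (Finset.card_eq_zero.mp hS.1)

theorem mem_Dset_rk {f : Finset N → ℕ} {i j : N} {S : Finset N} :
    S ∈ Dset (rk f) i j ↔ i ∉ S ∧ j ∉ S ∧ f (insert i S) < f (insert j S) := by
  simp [Dset, rk_strictRel_iff, ins]

variable {f : Finset N → ℕ} {A : Finset (Finset N)}

theorem card_level_zero_rk (hA : ∀ S, f S = 0 ↔ S ∈ A) (hA₀ : ∅ ∉ A) (hAne : A.Nonempty)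
    (p : Finset N → Prop) [DecidablePred p] :
    (Finset.univ.filter fun S : Coal N => level (rk f) S = 0 ∧ p S.1).card =
      (A.filter p).card := by
  obtain ⟨T, hT⟩ := hAne
  have hmin : ∃ U : Coal N, f U.1 = 0 :=
    ⟨⟨T, Finset.nonempty_iff_ne_empty.mpr fun h => hA₀ (h ▸ hT)⟩, (hA T).mpr hT⟩
  simp_rw [level_eq_zero_iff_best, best_rk_iff hmin, hA]
  rw [card_filter_coal (fun S => S ∈ A ∧ p S) fun h => hA₀ h.1]
  congr 1
  ext S
  simp

theorem theta_rk_zero (hA : ∀ S, f S = 0 ↔ S ∈ A) (hA₀ : ∅ ∉ A) (hAne : A.Nonempty)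
    (i : N) : theta (rk f) i 0 = (A.filter (i ∈ ·)).card := by
  rw [theta]
  convert card_level_zero_rk hA hA₀ hAne (i ∈ ·)

theorem Mmat_rk_zero (hA : ∀ S, f S = 0 ↔ S ∈ A) (hA₀ : ∅ ∉ A) (hAne : A.Nonempty)
    (i : N) (s : ℕ) :
    Mmat (rk f) i s 0 = (A.filter fun S => S.card = s ∧ i ∈ S).card := by
  rw [Mmat]
  convert card_level_zero_rk hA hA₀ hAne (fun S => S.card = s ∧ i ∈ S) using 3
  exact and_left_comm

end Counting

section Solutions

variable [DecidableEq N] [Fintype N] {r : CoalRanking N} {i j : N}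

theorem psol_cpSol_iff : Psol cpSol r i j ↔ (Dset r j i).card < (Dset r i j).card :=
  lt_iff_le_not_ge.symm

theorem psol_lexcelSol_of_theta_zero_lt (h : theta r j 0 < theta r i 0) :
    Psol lexcelSol r i j := by
  refine ⟨Or.inr ⟨0, fun _ hk => absurd hk (Nat.not_lt_zero _), h⟩, ?_⟩
  rintro (hall | ⟨s, hs, hlt⟩)
  · exact h.ne (hall 0)
  · rcases Nat.eq_zero_or_pos s with rfl | hpos
    · exact lt_asymm h hlt
    · exact h.ne (hs 0 hpos)

theorem psol_L1Sol_of_first_class {ŝ : ℕ} (hl : 1 < numClasses r) (hŝ : 1 ≤ ŝ)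
    (hŝN : ŝ ≤ Fintype.card N) (heq : ∀ s < ŝ, Mmat r i s 0 = Mmat r j s 0)
    (hlt : Mmat r j ŝ 0 < Mmat r i ŝ 0) : Psol L1Sol r i j := by
  refine ⟨Or.inr ⟨ŝ, 0, hŝ, hŝN, hl, fun _ _ hk => absurd hk (Nat.not_lt_zero _), heq, hlt⟩, ?_⟩
  rintro (hall | ⟨s', k', -, -, -, hk, hs, hlt'⟩)
  · exact hlt.ne (hall ŝ 0)
  obtain rfl : k' = 0 := by
    by_contra hk'
    exact hlt.ne (hk ŝ 0 (Nat.pos_of_ne_zero hk'))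
  rcases lt_trichotomy s' ŝ with h | rfl | h
  · exact hlt'.ne (heq s' h)
  · exact lt_asymm hlt hlt'
  · exact hlt.ne (hs ŝ h)

end Solutions

section Counterexample

variable [DecidableEq N] {i j c : N}

theorem insert_ne_singleton_of_ne (hij : i ≠ j) (S : Finset N) : insert i S ≠ {j} :=
  fun h => hij (Finset.mem_singleton.mp (h ▸ Finset.mem_insert_self i S))

theorem insert_ne_singleton_self {S : Finset N} (hj : j ∉ S) (hS : S ≠ ∅) :
    insert j S ≠ {j} := by
  simp only [ne_eq, Finset.ext_iff, Finset.mem_insert, Finset.mem_singleton,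
    Finset.notMem_empty] at hS ⊢
  grind

def topSet (i j c : N) : Finset (Finset N) := {{i}, {j}, {i, c}}

def baseRanking (i j c : N) : CoalRanking N := rk (topRank (topSet i j c))

def refinedRanking (i j c : N) : CoalRanking N :=
  rk (promoteToTop (topRank (topSet i j c)) {j})

theorem empty_notMem_topSet : ∅ ∉ topSet i j c := by
  simp [topSet, (Finset.insert_ne_empty i {c}).symm]

theorem insert_left_mem_topSet (hij : i ≠ j) (hic : i ≠ c) {S : Finset N} (hi : i ∉ S) :
    insert i S ∈ topSet i j c ↔ S = ∅ ∨ S = {c} := by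
  simp only [topSet, Finset.mem_insert, Finset.mem_singleton, Finset.ext_iff,
    Finset.notMem_empty]
  grind

theorem insert_right_mem_topSet (hij : i ≠ j) (hjc : j ≠ c) {S : Finset N} (hj : j ∉ S) :
    insert j S ∈ topSet i j c ↔ S = ∅ := by
  simp only [topSet, Finset.mem_insert, Finset.mem_singleton, Finset.ext_iff,
    Finset.notMem_empty]
  grind

theorem baseRanking_strictRel (hic : i ≠ c) (hjc : j ≠ c) :
    (baseRanking i j c).strictRel ⟨{i}, Finset.singleton_nonempty i⟩
      ⟨{c}, Finset.singleton_nonempty c⟩ := by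
  rw [baseRanking, rk_strictRel_iff, topRank_lt_iff]
  simp [topSet, hic, hic.symm, hjc.symm, Finset.ext_iff]

theorem refinedRanking_strictRel (hjc : j ≠ c) :
    (refinedRanking i j c).strictRel ⟨{j}, Finset.singleton_nonempty j⟩
      ⟨{c}, Finset.singleton_nonempty c⟩ := by
  rw [refinedRanking, rk_strictRel_iff]
  simp [promoteToTop, hjc.symm]

theorem baseRanking_rel_iff_refinedRanking {S T : Coal N}
    (hST : ¬(best (baseRanking i j c) S ∧ best (baseRanking i j c) T)) :
    (baseRanking i j c).rel S T ↔ (refinedRanking i j c).rel S T := by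
  have hj : topRank (topSet i j c) {j} = 0 := topRank_eq_zero_iff.mpr (by simp [topSet])
  rw [baseRanking, best_rk_iff ⟨⟨{j}, Finset.singleton_nonempty j⟩, hj⟩,
    best_rk_iff ⟨⟨{j}, Finset.singleton_nonempty j⟩, hj⟩] at hST
  exact (rk_promoteToTop_rel_iff hj hST).symm

variable [Fintype N]

theorem Dset_baseRanking (hij : i ≠ j) (hic : i ≠ c) (hjc : j ≠ c) :
    Dset (baseRanking i j c) i j = {{c}} := by
  ext S
  rw [baseRanking, mem_Dset_rk, topRank_lt_iff, Finset.mem_singleton]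
  constructor
  · rintro ⟨hi, hj, hiS, hjS⟩
    rw [insert_left_mem_topSet hij hic hi] at hiS
    rw [insert_right_mem_topSet hij hjc hj] at hjS
    tauto
  · rintro rfl
    have hi : i ∉ ({c} : Finset N) := by simpa using hic
    have hj : j ∉ ({c} : Finset N) := by simpa using hjc
    rw [insert_left_mem_topSet hij hic hi, insert_right_mem_topSet hij hjc hj]
    simp [hi, hj]

theorem Dset_baseRanking_swap (hij : i ≠ j) (hic : i ≠ c) (hjc : j ≠ c) :
    Dset (baseRanking i j c) j i = ∅ := by
  refine Finset.eq_empty_of_forall_notMem fun S hS => ?_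
  obtain ⟨hj, hi, hlt⟩ := mem_Dset_rk.mp hS
  obtain ⟨hjS, hiS⟩ := topRank_lt_iff.mp hlt
  rw [insert_right_mem_topSet hij hjc hj] at hjS
  rw [insert_left_mem_topSet hij hic hi] at hiS
  exact hiS (Or.inl hjS)

theorem Dset_refinedRanking (hij : i ≠ j) (hic : i ≠ c) (hjc : j ≠ c) :
    Dset (refinedRanking i j c) i j = {{c}} := by
  ext S
  rw [refinedRanking, mem_Dset_rk, Finset.mem_singleton,
    promoteToTop_of_ne (insert_ne_singleton_of_ne hij S)]
  by_cases hS : S = ∅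
  · subst hS
    simp [promoteToTop]
  constructor
  · rintro ⟨hi, hj, hlt⟩
    rw [promoteToTop_of_ne (insert_ne_singleton_self hj hS), add_lt_add_iff_right,
      topRank_lt_iff, insert_left_mem_topSet hij hic hi, insert_right_mem_topSet hij hjc hj] at hlt
    tauto
  · rintro rfl
    have hi : i ∉ ({c} : Finset N) := by simpa using hic
    have hj : j ∉ ({c} : Finset N) := by simpa using hjc
    rw [promoteToTop_of_ne (insert_ne_singleton_self hj hS), add_lt_add_iff_right,
      topRank_lt_iff, insert_left_mem_topSet hij hic hi, insert_right_mem_topSet hij hjc hj]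
    simp [hi, hj]

theorem Dset_refinedRanking_swap (hij : i ≠ j) (hic : i ≠ c) (hjc : j ≠ c) :
    Dset (refinedRanking i j c) j i = {∅} := by
  ext S
  rw [refinedRanking, mem_Dset_rk, Finset.mem_singleton,
    promoteToTop_of_ne (insert_ne_singleton_of_ne hij S)]
  by_cases hS : S = ∅
  · subst hS
    simp [promoteToTop]
  refine iff_of_false (fun ⟨hj, hi, hlt⟩ => ?_) hS
  rw [promoteToTop_of_ne (insert_ne_singleton_self hj hS), add_lt_add_iff_right, topRank_lt_iff,
    insert_left_mem_topSet hij hic hi, insert_right_mem_topSet hij hjc hj] at hlt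
  exact hS hlt.1

theorem theta_baseRanking (x : N) :
    theta (baseRanking i j c) x 0 = ((topSet i j c).filter (x ∈ ·)).card :=
  theta_rk_zero (fun _ => topRank_eq_zero_iff) empty_notMem_topSet ⟨{i}, by simp [topSet]⟩ x

theorem Mmat_baseRanking (x : N) (s : ℕ) :
    Mmat (baseRanking i j c) x s 0 =
      ((topSet i j c).filter fun S => S.card = s ∧ x ∈ S).card :=
  Mmat_rk_zero (fun _ => topRank_eq_zero_iff) empty_notMem_topSet ⟨{i}, by simp [topSet]⟩ x s

theorem theta_refinedRanking (x : N) :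
    theta (refinedRanking i j c) x 0 = (({{j}} : Finset (Finset N)).filter (x ∈ ·)).card :=
  theta_rk_zero (fun _ => promoteToTop_eq_zero_iff.trans Finset.mem_singleton.symm)
    (by simp) (Finset.singleton_nonempty _) x

theorem Mmat_refinedRanking (x : N) (s : ℕ) :
    Mmat (refinedRanking i j c) x s 0 =
      (({{j}} : Finset (Finset N)).filter fun S => S.card = s ∧ x ∈ S).card :=
  Mmat_rk_zero (fun _ => promoteToTop_eq_zero_iff.trans Finset.mem_singleton.symm)
    (by simp) (Finset.singleton_nonempty _) x s

theorem theta_baseRanking_lt (hij : i ≠ j) (hic : i ≠ c) (hjc : j ≠ c) :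
    theta (baseRanking i j c) j 0 < theta (baseRanking i j c) i 0 := by
  have hpair : ({i} : Finset N) ≠ {i, c} := by simp [Finset.ext_iff, hic.symm]
  simp [theta_baseRanking, topSet, Finset.filter_insert, Finset.filter_singleton, hij, hij.symm, hic, hjc,
    Finset.card_pair hpair]

theorem Mmat_baseRanking_one (hij : i ≠ j) (hic : i ≠ c) (hjc : j ≠ c) :
    Mmat (baseRanking i j c) i 1 0 = Mmat (baseRanking i j c) j 1 0 := by
  simp [Mmat_baseRanking, topSet, Finset.filter_insert, Finset.filter_singleton, hij, hic, hjc,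
    hij.symm]

theorem Mmat_baseRanking_two_lt (hij : i ≠ j) (hic : i ≠ c) (hjc : j ≠ c) :
    Mmat (baseRanking i j c) j 2 0 < Mmat (baseRanking i j c) i 2 0 := by
  simp [Mmat_baseRanking, topSet, Finset.filter_insert, Finset.filter_singleton, hij, hic, hjc,
    hij.symm]

theorem theta_refinedRanking_lt (hij : i ≠ j) :
    theta (refinedRanking i j c) i 0 < theta (refinedRanking i j c) j 0 := by
  simp [theta_refinedRanking, Finset.filter_singleton, hij]

theorem Mmat_refinedRanking_one_lt (hij : i ≠ j) :
    Mmat (refinedRanking i j c) i 1 0 < Mmat (refinedRanking i j c) j 1 0 := by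
  simp [Mmat_refinedRanking, Finset.filter_singleton, hij]

/-- if `|N| ≥ 3`, none of the CP-majority, the lex-cel and the `L⁽¹⁾`
solution satisfies Independence from the Best Set. -/
theorem stmt17 (h : 3 ≤ Fintype.card N) :
    ¬ IBS (cpSol : Sol N) ∧ ¬ IBS (lexcelSol : Sol N) ∧ ¬ IBS (L1Sol : Sol N) := by
  obtain ⟨t, -, ht⟩ := Finset.exists_subset_card_eq (s := Finset.univ) (n := 3) (by simpa using h)
  obtain ⟨i, j, c, hij, hic, hjc, -⟩ := Finset.card_eq_three.mp ht
  have hstrict := baseRanking_strictRel (j := j) hic hjc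
  have hIBS (R : Sol N) (hP : Psol R (baseRanking i j c) i j)
      (hR : R (refinedRanking i j c) j i) : ¬ IBS R :=
    not_IBS_of_psol_of_rel ⟨_, _, hstrict⟩ (fun _ _ => baseRanking_rel_iff_refinedRanking) hP hR
  refine ⟨hIBS _ ?_ ?_, hIBS _ ?_ ?_, hIBS _ ?_ ?_⟩
  · simp [psol_cpSol_iff, Dset_baseRanking hij hic hjc, Dset_baseRanking_swap hij hic hjc]
  · show (Dset _ i j).card ≤ (Dset _ j i).card
    simp [Dset_refinedRanking hij hic hjc, Dset_refinedRanking_swap hij hic hjc]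
  · exact psol_lexcelSol_of_theta_zero_lt (theta_baseRanking_lt hij hic hjc)
  · exact (psol_lexcelSol_of_theta_zero_lt (theta_refinedRanking_lt hij)).1
  · refine psol_L1Sol_of_first_class (one_lt_numClasses_of_strictRel hstrict) one_le_two
      (by omega) (fun s hs => ?_) (Mmat_baseRanking_two_lt hij hic hjc)
    interval_cases s
    · rw [Mmat_size_zero, Mmat_size_zero]
    · exact Mmat_baseRanking_one hij hic hjc
  · refine (psol_L1Sol_of_first_class
      (one_lt_numClasses_of_strictRel (refinedRanking_strictRel hjc)) le_rfl (by omega)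
      (fun s hs => ?_) (Mmat_refinedRanking_one_lt hij)).1
    rw [Nat.lt_one_iff.mp hs, Mmat_size_zero, Mmat_size_zero]

end Counterexample

end SocialRanking
end
end
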